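/- arXiv:2109.07952 — 3 statements merged into one kernel-verified Lean document; each statement's English description precedes it below -/
import Mathlib

section
/- ∫_ℝ (log(1+x²))² / (1+x²) dx = π³/3 + 4π (log 2)². -/
/-!
Substituting `u = tan x` turns the integral into `8 J`, `J = ∫₀^{π/2} log² (sin x) dx`.
On `(0, π/2)` write `S = log ∘ sin` and `C = log ∘ cos`. Since `S + C = log (sin 2x) - log 2`,
the doubling `x ↦ 2x` gives `∫ (S + C)² = J + (3π/2) log² 2`. Since `S - C = log ∘ tan`,
the substitutions `u = tan x` and `u = eᵗ` give `∫ (S - C)² = ∫₀^∞ t² / cosh t dt`;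
expanding `1 / cosh t = 2 ∑ (-1)ⁿ e^{-(2n+1)t}` and integrating termwise (each term is a
Gamma integral) yields `4 β(3) = π³/8`. Finally `(S + C)² + (S - C)² = 2 S² + 2 C²` and
`∫ C² = ∫ S² = J`, so `4 J = J + (3π/2) log² 2 + π³/8`.
-/

open Real MeasureTheory Set

lemma integral_comp_cos_eq_integral_comp_sin (f : ℝ → ℝ) :
    ∫ x in 0..π / 2, f (cos x) = ∫ x in 0..π / 2, f (sin x) := by
  simp [← sin_pi_div_two_sub,
    intervalIntegral.integral_comp_sub_left (fun x ↦ f (sin x)) (π / 2)]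

lemma IntervalIntegrable.comp_cos_of_comp_sin {f : ℝ → ℝ}
    (hf : IntervalIntegrable (fun x ↦ f (sin x)) volume 0 (π / 2)) :
    IntervalIntegrable (fun x ↦ f (cos x)) volume 0 (π / 2) := by
  simpa [← sin_pi_div_two_sub] using (hf.comp_sub_left (π / 2)).symm

lemma integral_comp_sin_pi_div_two_pi (f : ℝ → ℝ) :
    ∫ x in π / 2..π, f (sin x) = ∫ x in 0..π / 2, f (sin x) := by
  simpa [sin_pi_sub, show π - π / 2 = π / 2 by ring]
    using intervalIntegral.integral_comp_sub_left (fun x ↦ f (sin x)) π (a := π / 2) (b := π)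

lemma IntervalIntegrable.comp_sin_pi_div_two_pi {f : ℝ → ℝ}
    (hf : IntervalIntegrable (fun x ↦ f (sin x)) volume 0 (π / 2)) :
    IntervalIntegrable (fun x ↦ f (sin x)) volume (π / 2) π := by
  have := (hf.comp_sub_left π).symm
  simp_rw [sin_pi_sub, sub_zero] at this
  rwa [show π - π / 2 = π / 2 by ring] at this

lemma IntervalIntegrable.comp_sin_zero_pi {f : ℝ → ℝ}
    (hf : IntervalIntegrable (fun x ↦ f (sin x)) volume 0 (π / 2)) :
    IntervalIntegrable (fun x ↦ f (sin x)) volume 0 π :=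
  hf.trans hf.comp_sin_pi_div_two_pi

lemma integral_comp_sin_zero_pi {f : ℝ → ℝ}
    (hf : IntervalIntegrable (fun x ↦ f (sin x)) volume 0 (π / 2)) :
    ∫ x in 0..π, f (sin x) = 2 * ∫ x in 0..π / 2, f (sin x) := by
  rw [← intervalIntegral.integral_add_adjacent_intervals hf hf.comp_sin_pi_div_two_pi,
    integral_comp_sin_pi_div_two_pi]
  ring

lemma sq_log_le_rpow {t : ℝ} (h0 : 0 < t) (h1 : t ≤ 1) :
    log t ^ 2 ≤ 16 * t ^ (-(1 / 2) : ℝ) := by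
  have h := abs_log_mul_self_rpow_lt t (1 / 4) h0 h1 (by norm_num)
  have hsq : (log t * t ^ (1 / 4 : ℝ)) ^ 2 ≤ 16 := by
    nlinarith [sq_abs (log t * t ^ (1 / 4 : ℝ)), abs_nonneg (log t * t ^ (1 / 4 : ℝ))]
  have hpow : (t ^ (1 / 4 : ℝ)) ^ 2 * t ^ (-(1 / 2) : ℝ) = 1 := by
    rw [← rpow_natCast, ← rpow_mul h0.le, ← rpow_add h0]; norm_num
  calc log t ^ 2 = (log t * t ^ (1 / 4 : ℝ)) ^ 2 * t ^ (-(1 / 2) : ℝ) := by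
        rw [mul_pow, mul_assoc, hpow, mul_one]
    _ ≤ 16 * t ^ (-(1 / 2) : ℝ) := by gcongr

lemma intervalIntegrable_log_sin_sq :
    IntervalIntegrable (fun x ↦ log (sin x) ^ 2) volume 0 (π / 2) := by
  have hdom : IntervalIntegrable
      (fun x : ℝ ↦ 16 * (2 / π) ^ (-(1 / 2) : ℝ) * x ^ (-(1 / 2) : ℝ)) volume 0 (π / 2) :=
    (intervalIntegral.intervalIntegrable_rpow' (by norm_num)).const_mul _
  refine hdom.mono_fun ((measurable_log.comp measurable_sin).pow_const 2).aestronglyMeasurable ?_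
  rw [uIoc_of_le (by positivity)]
  filter_upwards [ae_restrict_mem measurableSet_Ioc] with x ⟨hx0, hx⟩
  have hjordan : 2 / π * x ≤ sin x := mul_le_sin hx0.le hx
  have hsin : 0 < sin x := (by positivity : 0 < 2 / π * x).trans_le hjordan
  rw [norm_of_nonneg (by positivity), norm_of_nonneg (by positivity), mul_assoc,
    ← mul_rpow (by positivity) hx0.le]
  calc log (sin x) ^ 2 ≤ 16 * sin x ^ (-(1 / 2) : ℝ) := sq_log_le_rpow hsin (sin_le_one x)
    _ ≤ 16 * (2 / π * x) ^ (-(1 / 2) : ℝ) := by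
      gcongr 16 * ?_
      exact rpow_le_rpow_of_nonpos (by positivity) hjordan (by norm_num)

lemma image_tan_Ioo_zero_pi_div_two : tan '' Ioo 0 (π / 2) = Ioi 0 := by
  ext y
  constructor
  · rintro ⟨x, ⟨hx0, hx⟩, rfl⟩
    exact tan_pos_of_pos_of_lt_pi_div_two hx0 hx
  · exact fun hy ↦ ⟨arctan y, ⟨arctan_pos.mpr hy, arctan_lt_pi_div_two y⟩, tan_arctan y⟩

lemma integral_Ioi_div_one_add_sq_eq_integral_tan (h : ℝ → ℝ) :
    ∫ u in Ioi 0, h u / (1 + u ^ 2) = ∫ x in Ioo 0 (π / 2), h (tan x) := by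
  have hcos : ∀ x ∈ Ioo 0 (π / 2), 0 < cos x := fun x hx ↦
    cos_pos_of_mem_Ioo ⟨by linarith [hx.1, pi_pos], hx.2⟩
  rw [← image_tan_Ioo_zero_pi_div_two,
    integral_image_eq_integral_abs_deriv_smul measurableSet_Ioo
      (fun x hx ↦ (hasDerivAt_tan (hcos x hx).ne').hasDerivWithinAt)
      (injOn_tan.mono (Ioo_subset_Ioo_left (by linarith [pi_pos])))]
  refine setIntegral_congr_fun measurableSet_Ioo fun x hx ↦ ?_
  have h1 : 1 / cos x ^ 2 = 1 + tan x ^ 2 := by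
    rw [one_div, ← inv_one_add_tan_sq (hcos x hx).ne', inv_inv]
  rw [h1, smul_eq_mul, abs_of_pos (by positivity)]
  field_simp

lemma integral_Ioi_zero_eq_integral_exp (g : ℝ → ℝ) :
    ∫ u in Ioi 0, g u = ∫ t, exp t * g (exp t) := by
  rw [← range_exp, ← image_univ, integral_image_eq_integral_abs_deriv_smul MeasurableSet.univ
    (fun t _ ↦ (hasDerivAt_exp t).hasDerivWithinAt) exp_injective.injOn, Measure.restrict_univ]
  simp [abs_of_pos (exp_pos _)]

lemma hasSum_neg_one_pow_div_two_mul_add_one_pow_three :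
    HasSum (fun n : ℕ ↦ (-1 : ℝ) ^ n / (2 * n + 1) ^ 3) (π ^ 3 / 32) := by
  have hodd : Function.Injective (fun k : ℕ ↦ 2 * k + 1) := fun a b h ↦ by simpa using h
  have heven :
      ∀ n ∉ range (fun k : ℕ ↦ 2 * k + 1), 1 / (n : ℝ) ^ 3 * sin (π * n / 2) = 0 := by
    intro n hn
    obtain ⟨k, rfl⟩ : Even n := by simpa [Nat.not_odd_iff_even, eq_comm] using hn
    rw [show π * ((k + k : ℕ) : ℝ) / 2 = k * π by push_cast; ring, sin_nat_mul_pi, mul_zero]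
  convert (hodd.hasSum_iff heven).mpr hasSum_L_function_mod_four_eval_three using 1
  ext k
  have hsin : sin (π * (2 * k + 1) / 2) = (-1) ^ k := by
    rw [show π * (2 * k + 1) / 2 = π / 2 + k * π by ring, sin_add_nat_mul_pi, sin_pi_div_two,
      mul_one]
  simp only [Function.comp_apply]
  push_cast
  rw [hsin]
  ring

lemma integral_sq_mul_exp_neg_mul {r : ℝ} (hr : 0 < r) :
    ∫ t in Ioi 0, t ^ 2 * exp (-(r * t)) = 2 / r ^ 3 := by
  have h := integral_rpow_mul_exp_neg_mul_Ioi (a := 3) (by norm_num) hr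
  rw [show (3 : ℝ) = (2 : ℕ) + 1 by norm_num, Gamma_nat_eq_factorial] at h
  norm_num at h
  rw [h]
  ring

lemma hasSum_inv_cosh {t : ℝ} (ht : 0 < t) :
    HasSum (fun n : ℕ ↦ 2 * (-1) ^ n * exp (-((2 * n + 1) * t))) (cosh t)⁻¹ := by
  have hratio : |-exp (-(2 * t))| < 1 := by
    rw [abs_neg, abs_of_pos (exp_pos _), exp_lt_one_iff]; linarith
  have hterm (n : ℕ) :
      2 * exp (-t) * (-exp (-(2 * t))) ^ n = 2 * (-1) ^ n * exp (-((2 * n + 1) * t)) := by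
    rw [neg_pow, ← exp_nat_mul, show -((2 * n + 1) * t) = -t + n * -(2 * t) by ring, exp_add]
    ring
  have hval : 2 * exp (-t) * (1 - -exp (-(2 * t)))⁻¹ = (cosh t)⁻¹ := by
    have he := exp_pos t
    rw [cosh_eq, sub_neg_eq_add, show -(2 * t) = -t + -t by ring, exp_add, exp_neg]
    field_simp
  simpa only [hterm, hval] using (hasSum_geometric_of_abs_lt_one hratio).mul_left (2 * exp (-t))

lemma integral_sq_div_cosh : ∫ t in Ioi 0, t ^ 2 / cosh t = π ^ 3 / 8 := by
  set F : ℕ → ℝ → ℝ := fun n t ↦ 2 * (-1) ^ n * (t ^ 2 * exp (-((2 * n + 1) * t)))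
  have hr (n : ℕ) : (0 : ℝ) < 2 * n + 1 := by positivity
  have hF (n : ℕ) : ∫ t in Ioi 0, F n t = 4 * ((-1) ^ n / (2 * n + 1) ^ 3) := by
    rw [integral_const_mul, integral_sq_mul_exp_neg_mul (hr n)]
    ring
  have hF_int (n : ℕ) : Integrable (F n) (volume.restrict (Ioi 0)) := by
    refine .const_mul (.of_integral_ne_zero ?_) _
    rw [integral_sq_mul_exp_neg_mul (hr n)]
    positivity
  have hF_norm (n : ℕ) :
      ∫ t in Ioi 0, ‖F n t‖ = 4 * |(-1 : ℝ) ^ n / (2 * n + 1) ^ 3| := by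
    have hnorm (t : ℝ) : ‖F n t‖ = 2 * (t ^ 2 * exp (-((2 * n + 1) * t))) := by simp [F]
    simp_rw [hnorm]
    rw [integral_const_mul, integral_sq_mul_exp_neg_mul (hr n), abs_div,
      abs_of_pos (pow_pos (hr n) 3)]
    simp only [abs_pow, abs_neg, abs_one, one_pow]
    ring
  have hsum := hasSum_integral_of_summable_integral_norm hF_int
    ((hasSum_neg_one_pow_div_two_mul_add_one_pow_three.summable.abs.mul_left 4).congr
      fun n ↦ (hF_norm n).symm)
  have hpt : ∀ t ∈ Ioi (0 : ℝ), ∑' n, F n t = t ^ 2 / cosh t := fun t ht ↦ by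
    rw [div_eq_mul_inv, ← ((hasSum_inv_cosh ht).mul_left (t ^ 2)).tsum_eq]
    exact tsum_congr fun n ↦ by ring
  simp_rw [hF] at hsum
  rw [← setIntegral_congr_fun measurableSet_Ioi hpt,
    hsum.unique (hasSum_neg_one_pow_div_two_mul_add_one_pow_three.mul_left 4)]
  ring

lemma integral_sq_log_div_one_add_sq : ∫ u in Ioi 0, log u ^ 2 / (1 + u ^ 2) = π ^ 3 / 8 := by
  have hpt (t : ℝ) : exp t * (log (exp t) ^ 2 / (1 + exp t ^ 2)) = |t| ^ 2 / cosh |t| / 2 := by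
    rw [log_exp, sq_abs, cosh_abs, cosh_eq, exp_neg]
    field_simp
    ring
  rw [integral_Ioi_zero_eq_integral_exp, funext hpt,
    integral_comp_abs (f := fun t ↦ t ^ 2 / cosh t / 2), integral_div, integral_sq_div_cosh]
  ring

lemma integral_sq_log_sin_add_log_cos :
    ∫ x in 0..π / 2, (log (sin x) + log (cos x)) ^ 2
      = (∫ x in 0..π / 2, log (sin x) ^ 2) + 3 * π / 2 * log 2 ^ 2 := by
  have hsq := intervalIntegrable_log_sin_sq.comp_sin_zero_pi (f := fun t ↦ log t ^ 2)
  have hlog : IntervalIntegrable (fun x ↦ log (sin x)) volume 0 π := intervalIntegrable_log_sin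
  calc ∫ x in 0..π / 2, (log (sin x) + log (cos x)) ^ 2
      = ∫ x in 0..π / 2, (log (sin (2 * x)) - log 2) ^ 2 := by
        refine intervalIntegral.integral_congr_Ioo_of_le (by positivity) fun x ⟨hx0, hx⟩ ↦ ?_
        have hsin : 0 < sin x := sin_pos_of_pos_of_lt_pi hx0 (by linarith [pi_pos])
        have hcos : 0 < cos x := cos_pos_of_mem_Ioo ⟨by linarith [pi_pos], hx⟩
        rw [sin_two_mul, log_mul (by positivity) hcos.ne', log_mul two_ne_zero hsin.ne']
        ring
    _ = 2⁻¹ * ∫ x in 0..π, (log (sin x) - log 2) ^ 2 := by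
        rw [intervalIntegral.integral_comp_mul_left (fun x ↦ (log (sin x) - log 2) ^ 2)
          two_ne_zero]
        simp [mul_div_cancel₀]
    _ = 2⁻¹ * ((∫ x in 0..π, log (sin x) ^ 2) - 2 * log 2 * (∫ x in 0..π, log (sin x))
          + π * log 2 ^ 2) := by
        have hexpand (x : ℝ) : (log (sin x) - log 2) ^ 2
            = log (sin x) ^ 2 - 2 * log 2 * log (sin x) + log 2 ^ 2 := by ring
        simp_rw [hexpand]
        rw [intervalIntegral.integral_add (hsq.sub (hlog.const_mul _)) intervalIntegrable_const,
          intervalIntegral.integral_sub hsq (hlog.const_mul _),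
          intervalIntegral.integral_const_mul, intervalIntegral.integral_const]
        simp
    _ = _ := by
        rw [integral_comp_sin_zero_pi (f := fun t ↦ log t ^ 2) intervalIntegrable_log_sin_sq,
          integral_log_sin_zero_pi]
        ring

lemma integral_sq_log_sin_sub_log_cos :
    ∫ x in 0..π / 2, (log (sin x) - log (cos x)) ^ 2 = π ^ 3 / 8 := by
  rw [intervalIntegral.integral_of_le (by positivity), integral_Ioc_eq_integral_Ioo,
    ← integral_sq_log_div_one_add_sq, integral_Ioi_div_one_add_sq_eq_integral_tan (log · ^ 2)]
  refine setIntegral_congr_fun measurableSet_Ioo fun x ⟨hx0, hx⟩ ↦ ?_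
  have hsin : 0 < sin x := sin_pos_of_pos_of_lt_pi hx0 (by linarith [pi_pos])
  have hcos : 0 < cos x := cos_pos_of_mem_Ioo ⟨by linarith [pi_pos], hx⟩
  rw [tan_eq_sin_div_cos, log_div hsin.ne' hcos.ne']

lemma integral_sq_log_sin :
    ∫ x in 0..π / 2, log (sin x) ^ 2 = π ^ 3 / 24 + π / 2 * log 2 ^ 2 := by
  have hsin := intervalIntegrable_log_sin_sq
  have hcos := hsin.comp_cos_of_comp_sin (f := fun t ↦ log t ^ 2)
  have hdom := (hsin.const_mul 2).add (hcos.const_mul 2)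
  have hmeas_sin : Measurable fun x ↦ log (sin x) := measurable_log.comp measurable_sin
  have hmeas_cos : Measurable fun x ↦ log (cos x) := measurable_log.comp measurable_cos
  have hplus : IntervalIntegrable (fun x ↦ (log (sin x) + log (cos x)) ^ 2) volume 0 (π / 2) :=
    hdom.mono_fun ((hmeas_sin.add hmeas_cos).pow_const 2).aestronglyMeasurable
      (ae_of_all _ fun x ↦ by
        dsimp only
        rw [norm_of_nonneg (by positivity), norm_of_nonneg (by positivity)]
        nlinarith [sq_nonneg (log (sin x) - log (cos x))])
  have hminus : IntervalIntegrable (fun x ↦ (log (sin x) - log (cos x)) ^ 2) volume 0 (π / 2) :=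
    hdom.mono_fun ((hmeas_sin.sub hmeas_cos).pow_const 2).aestronglyMeasurable
      (ae_of_all _ fun x ↦ by
        dsimp only
        rw [norm_of_nonneg (by positivity), norm_of_nonneg (by positivity)]
        nlinarith [sq_nonneg (log (sin x) + log (cos x))])
  have hparallelogram : (∫ x in 0..π / 2, (log (sin x) + log (cos x)) ^ 2)
      + ∫ x in 0..π / 2, (log (sin x) - log (cos x)) ^ 2
      = 4 * ∫ x in 0..π / 2, log (sin x) ^ 2 := by
    rw [← intervalIntegral.integral_add hplus hminus]
    calc _ = ∫ x in 0..π / 2, (2 * log (sin x) ^ 2 + 2 * log (cos x) ^ 2) :=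
          intervalIntegral.integral_congr fun x _ ↦ by ring
      _ = _ := by
          rw [intervalIntegral.integral_add (hsin.const_mul 2) (hcos.const_mul 2),
            intervalIntegral.integral_const_mul, intervalIntegral.integral_const_mul,
            integral_comp_cos_eq_integral_comp_sin (log · ^ 2)]
          ring
  rw [integral_sq_log_sin_add_log_cos, integral_sq_log_sin_sub_log_cos] at hparallelogram
  linarith

lemma integral_sq_log_one_add_sq_div_one_add_sq_Ioi :
    ∫ u in Ioi 0, log (1 + u ^ 2) ^ 2 / (1 + u ^ 2) = π ^ 3 / 6 + 2 * π * log 2 ^ 2 := by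
  rw [integral_Ioi_div_one_add_sq_eq_integral_tan (fun u ↦ log (1 + u ^ 2) ^ 2)]
  have hpt : EqOn (fun x ↦ log (1 + tan x ^ 2) ^ 2) (fun x ↦ 4 * log (cos x) ^ 2)
      (Ioo 0 (π / 2)) := fun x ⟨hx0, hx⟩ ↦ by
    have hcos : 0 < cos x := cos_pos_of_mem_Ioo ⟨by linarith [pi_pos], hx⟩
    simp only
    rw [← inv_inv (1 + tan x ^ 2), inv_one_add_tan_sq hcos.ne', log_inv, log_pow]
    push_cast
    ring
  rw [setIntegral_congr_fun measurableSet_Ioo hpt, integral_const_mul,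
    ← integral_Ioc_eq_integral_Ioo, ← intervalIntegral.integral_of_le (by positivity),
    integral_comp_cos_eq_integral_comp_sin (log · ^ 2), integral_sq_log_sin]
  ring

theorem stmt_4 :
    (∫ x : ℝ, (Real.log (1 + x ^ 2)) ^ 2 / (1 + x ^ 2))
      = Real.pi ^ 3 / 3 + 4 * Real.pi * (Real.log 2) ^ 2 := by
  have heven (x : ℝ) : log (1 + x ^ 2) ^ 2 / (1 + x ^ 2)
      = log (1 + |x| ^ 2) ^ 2 / (1 + |x| ^ 2) := by rw [sq_abs]
  rw [funext heven, integral_comp_abs (f := fun u ↦ log (1 + u ^ 2) ^ 2 / (1 + u ^ 2)),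
    integral_sq_log_one_add_sq_div_one_add_sq_Ioi]
  ring
end

section
/- Let s > 2 and define K_s(x) = (1/(2π)) ∫_ℝ e^{−|ξ|^s} cos(x ξ) dξ for x ∈ ℝ (the kernel of the higher-order heat propagator e^{−Λ^s}, whose imaginary part vanishes by symmetry). Then K_s takes a strictly negative value: there exists x ∈ ℝ with K_s(x) < 0; in particular min_{x∈ℝ} K_s(x) < 0. -/
/-!
Suppose `K_s ≥ 0`. Test it against `w (ε x)`, where `w y = exp (-y²) - exp (-2 y²)` is nonnegative
and of size `y²` near `0`: since `K_s` is continuous with `K_s 0 > 0`, the pairing is `≥ c ε²`.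
By Fubini and rescaling, the same pairing equals `∫ exp (-|ε u| ^ s) ŵ u du` up to `2π`, and
`ŵ` has mean `2π w 0 = 0`, so `exp (-|ε u| ^ s)` may be replaced by `exp (-|ε u| ^ s) - 1`,
which is `O (|ε u| ^ s)`; the pairing is `O (ε ^ s)`. As `s > 2`, this is absurd for small `ε`.
-/

open Real MeasureTheory Set Filter Topology
open Complex (I)

theorem abs_exp_neg_sub_one_le {t : ℝ} (ht : 0 ≤ t) : |exp (-t) - 1| ≤ t := by
  rw [abs_sub_comm, abs_of_nonneg (sub_nonneg.mpr (exp_le_one_iff.mpr (neg_nonpos.mpr ht)))]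
  linarith [add_one_le_exp (-t)]

theorem MeasureTheory.Integrable.of_integrableOn_Ioi_of_even {f : ℝ → ℝ}
    (heven : ∀ x, f (-x) = f x) (hf : IntegrableOn f (Ioi 0)) : Integrable f := by
  have hneg : IntegrableOn f (Iio 0) := by
    simpa [heven] using hf.comp_neg
  rw [← integrableOn_univ, ← Iio_union_Ici (a := (0 : ℝ)), integrableOn_union,
    integrableOn_Ici_iff_integrableOn_Ioi]
  exact ⟨hneg, hf⟩

theorem integrable_abs_rpow_mul_exp_neg_mul_sq {b : ℝ} (hb : 0 < b) {s : ℝ} (hs : -1 < s) :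
    Integrable fun x : ℝ => |x| ^ s * exp (-b * x ^ 2) :=
  Integrable.of_integrableOn_Ioi_of_even (fun x => by simp)
    ((integrableOn_rpow_mul_exp_neg_mul_sq hb hs).congr_fun
      (fun x hx => by simp [abs_of_pos (mem_Ioi.mp hx)]) measurableSet_Ioi)

theorem integrable_exp_neg_abs_rpow {p : ℝ} (hp : 0 < p) :
    Integrable fun x : ℝ => exp (-|x| ^ p) :=
  Integrable.of_integrableOn_Ioi_of_even (fun x => by simp)
    ((integrableOn_rpow_mul_exp_neg_rpow (s := 0) (by norm_num) hp).congr_fun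
      (fun x hx => by simp [abs_of_pos (mem_Ioi.mp hx)]) measurableSet_Ioi)

noncomputable def cosTransform (f : ℝ → ℝ) (x : ℝ) : ℝ := ∫ ξ, f ξ * cos (x * ξ)

section cosTransform

variable {f g : ℝ → ℝ}

theorem MeasureTheory.Integrable.mul_cos_mul (hf : Integrable f) (x : ℝ) :
    Integrable fun ξ => f ξ * cos (x * ξ) :=
  hf.mul_bdd (by fun_prop) (ae_of_all _ fun ξ => abs_cos_le_one _)

theorem abs_mul_cos_le (a b : ℝ) : |a * cos b| ≤ |a| := by
  rw [abs_mul]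
  exact mul_le_of_le_one_right (abs_nonneg _) (abs_cos_le_one _)

theorem abs_cosTransform_le (hf : Integrable f) (x : ℝ) :
    |cosTransform f x| ≤ ∫ ξ, |f ξ| :=
  abs_integral_le_integral_abs.trans
    (integral_mono (hf.mul_cos_mul x).abs hf.abs fun _ => abs_mul_cos_le _ _)

theorem continuous_cosTransform (hf : Integrable f) : Continuous (cosTransform f) :=
  continuous_of_dominated (fun x => (hf.mul_cos_mul x).aestronglyMeasurable)
    (fun x => ae_of_all _ fun _ => abs_mul_cos_le _ _) hf.abs
    (ae_of_all _ fun _ => by fun_prop)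

theorem cosTransform_comp_mul_left {ε : ℝ} (hε : 0 < ε) (ξ : ℝ) :
    cosTransform (fun x => f (ε * x)) ξ = ε⁻¹ * cosTransform f (ξ / ε) := by
  have := Measure.integral_comp_mul_left (fun y => f y * cos (ξ / ε * y)) ε
  simp only [smul_eq_mul, abs_of_pos (inv_pos.mpr hε)] at this
  rw [cosTransform, cosTransform, ← this]
  congr with x
  field_simp

theorem integral_cosTransform_mul (hf : Integrable f) (hg : Integrable g) :
    ∫ x, cosTransform f x * g x = ∫ ξ, f ξ * cosTransform g ξ := by
  have hprod : Integrable (Function.uncurry fun x ξ => f ξ * cos (x * ξ) * g x)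
      (volume.prod volume) := by
    refine (hg.abs.mul_prod hf.abs).mono' ?_ (ae_of_all _ fun p => ?_)
    · exact ((hf.1.comp_snd.mul (by fun_prop)).mul hg.1.comp_fst)
    · simp only [Function.uncurry, norm_mul, Real.norm_eq_abs]
      nlinarith [mul_nonneg (abs_nonneg (f p.2)) (abs_nonneg (g p.1)), abs_cos_le_one (p.1 * p.2)]
  simp only [cosTransform, ← integral_mul_const, ← integral_const_mul]
  rw [integral_integral_swap hprod]
  congr with ξ
  congr with x
  rw [mul_comm x ξ]
  ring

theorem cosTransform_sub (hf : Integrable f) (hg : Integrable g) (x : ℝ) :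
    cosTransform (fun ξ => f ξ - g ξ) x = cosTransform f x - cosTransform g x := by
  simp only [cosTransform, sub_mul]
  exact integral_sub (hf.mul_cos_mul x) (hg.mul_cos_mul x)

end cosTransform

theorem cosTransform_gaussian {b : ℝ} (hb : 0 < b) (t : ℝ) :
    cosTransform (fun x => exp (-b * x ^ 2)) t = √(π / b) * exp (-t ^ 2 / (4 * b)) := by
  have hb' : 0 < (b : ℂ).re := by simpa using hb
  have hint : Integrable fun x : ℝ => Complex.exp (I * t * x) * Complex.exp (-b * x ^ 2) := by
    simpa [← Complex.exp_add, add_comm] using integrable_cexp_quadratic hb' (I * t) 0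
  have hre (x : ℝ) : (Complex.exp (I * t * x) * Complex.exp (-b * x ^ 2)).re
      = exp (-b * x ^ 2) * cos (t * x) := by
    rw [show I * t * x = ((t * x : ℝ) : ℂ) * I by push_cast; ring,
      show -(b : ℂ) * x ^ 2 = ((-b * x ^ 2 : ℝ) : ℂ) by push_cast; ring, ← Complex.ofReal_exp,
      Complex.re_mul_ofReal, Complex.exp_ofReal_mul_I_re, mul_comm]
  have hrhs : (((π : ℂ) / b) ^ (1 / 2 : ℂ) * Complex.exp (-(t : ℂ) ^ 2 / (4 * b))).re
      = √(π / b) * exp (-t ^ 2 / (4 * b)) := by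
    rw [show ((π : ℂ) / b) ^ (1 / 2 : ℂ) = ((√(π / b) : ℝ) : ℂ) by
        rw [sqrt_eq_rpow, Complex.ofReal_cpow (by positivity)]; push_cast; ring_nf,
      show -(t : ℂ) ^ 2 / (4 * b) = ((-t ^ 2 / (4 * b) : ℝ) : ℂ) by push_cast; ring,
      ← Complex.ofReal_exp, ← Complex.ofReal_mul, Complex.ofReal_re]
  rw [← hrhs, ← fourierIntegral_gaussian hb', ← RCLike.re_to_complex, ← integral_re hint]
  simp only [RCLike.re_to_complex, hre, cosTransform]

noncomputable def gaussianDiff (y : ℝ) : ℝ := exp (-y ^ 2) - exp (-2 * y ^ 2)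

theorem gaussianDiff_eq : gaussianDiff = fun y => exp (-1 * y ^ 2) - exp (-2 * y ^ 2) := by
  ext y
  rw [gaussianDiff, neg_one_mul]

theorem integrable_gaussianDiff : Integrable gaussianDiff := by
  rw [gaussianDiff_eq]
  exact (integrable_exp_neg_mul_sq one_pos).sub (integrable_exp_neg_mul_sq two_pos)

theorem gaussianDiff_nonneg (y : ℝ) : 0 ≤ gaussianDiff y := by
  rw [gaussianDiff, sub_nonneg, exp_le_exp]
  nlinarith [sq_nonneg y]

theorem exp_neg_two_mul_sq_le_gaussianDiff {y : ℝ} (hy : |y| ≤ 1) :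
    exp (-2) * y ^ 2 ≤ gaussianDiff y := by
  have hy2 : y ^ 2 ≤ 1 := by nlinarith [sq_abs y, abs_nonneg y]
  have hfactor : gaussianDiff y = exp (-2 * y ^ 2) * (exp (y ^ 2) - 1) := by
    rw [gaussianDiff, mul_sub, ← exp_add, mul_one]
    ring_nf
  rw [hfactor]
  exact mul_le_mul (exp_le_exp.mpr (by linarith)) (by linarith [add_one_le_exp (y ^ 2)])
    (sq_nonneg y) (exp_pos _).le

theorem cosTransform_gaussianDiff (u : ℝ) :
    cosTransform gaussianDiff u
      = √π * exp (-(1 / 4) * u ^ 2) - √(π / 2) * exp (-(1 / 8) * u ^ 2) := by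
  rw [gaussianDiff_eq,
    cosTransform_sub (integrable_exp_neg_mul_sq one_pos) (integrable_exp_neg_mul_sq two_pos),
    cosTransform_gaussian one_pos, cosTransform_gaussian two_pos]
  simp only [div_one]
  ring_nf

theorem integrable_rpow_mul_cosTransform_gaussianDiff {s : ℝ} (hs : -1 < s) :
    Integrable fun u => |u| ^ s * cosTransform gaussianDiff u := by
  simp only [cosTransform_gaussianDiff, mul_sub, mul_left_comm (|_| ^ s)]
  exact ((integrable_abs_rpow_mul_exp_neg_mul_sq (by norm_num) hs).const_mul _).sub
    ((integrable_abs_rpow_mul_exp_neg_mul_sq (by norm_num) hs).const_mul _)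

theorem integrable_cosTransform_gaussianDiff : Integrable (cosTransform gaussianDiff) := by
  simpa using integrable_rpow_mul_cosTransform_gaussianDiff (s := 0) (by norm_num)

theorem integral_cosTransform_gaussianDiff : ∫ u, cosTransform gaussianDiff u = 0 := by
  simp only [cosTransform_gaussianDiff]
  rw [integral_sub ((integrable_exp_neg_mul_sq (by norm_num)).const_mul _)
      ((integrable_exp_neg_mul_sq (by norm_num)).const_mul _), integral_const_mul,
    integral_const_mul, integral_gaussian, integral_gaussian, ← sqrt_mul pi_pos.le,
    ← sqrt_mul (by positivity), sub_eq_zero]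
  ring_nf

theorem integral_cosTransform_mul_gaussianDiff_comp_mul_left {φ : ℝ → ℝ} (hφ : Integrable φ)
    {ε : ℝ} (hε : 0 < ε) :
    ∫ x, cosTransform φ x * gaussianDiff (ε * x)
      = ∫ u, φ (ε * u) * cosTransform gaussianDiff u := by
  rw [integral_cosTransform_mul hφ (integrable_gaussianDiff.comp_mul_left' hε.ne')]
  simp only [cosTransform_comp_mul_left hε]
  have := Measure.integral_comp_mul_left (fun ξ => φ ξ * cosTransform gaussianDiff (ξ / ε)) ε
  simp only [smul_eq_mul, abs_of_pos (inv_pos.mpr hε), mul_div_cancel_left₀ _ hε.ne'] at this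
  rw [this, ← integral_const_mul]
  congr with ξ
  ring

theorem integral_cosTransform_mul_gaussianDiff_le {φ : ℝ → ℝ} (hφ : Integrable φ) {s : ℝ}
    (hs : -1 < s) (hφ1 : ∀ ξ, |φ ξ - 1| ≤ |ξ| ^ s) {ε : ℝ} (hε : 0 < ε) :
    ∫ x, cosTransform φ x * gaussianDiff (ε * x)
      ≤ ε ^ s * ∫ u, |u| ^ s * |cosTransform gaussianDiff u| := by
  set ĝ := cosTransform gaussianDiff
  have hmajorant : Integrable fun u => ε ^ s * (|u| ^ s * |ĝ u|) := by
    refine ((integrable_rpow_mul_cosTransform_gaussianDiff hs).abs.const_mul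
      (ε ^ s)).congr (ae_of_all _ fun u => ?_)
    simp only [abs_mul, abs_of_nonneg (rpow_nonneg (abs_nonneg u) s), ĝ]
  have hbound (u : ℝ) : |(φ (ε * u) - 1) * ĝ u| ≤ ε ^ s * (|u| ^ s * |ĝ u|) := by
    calc |(φ (ε * u) - 1) * ĝ u| = |φ (ε * u) - 1| * |ĝ u| := abs_mul _ _
      _ ≤ |ε * u| ^ s * |ĝ u| := mul_le_mul_of_nonneg_right (hφ1 _) (abs_nonneg _)
      _ = ε ^ s * (|u| ^ s * |ĝ u|) := by
        rw [abs_mul, mul_rpow (abs_nonneg _) (abs_nonneg _), abs_of_pos hε, mul_assoc]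
  have hdiff : Integrable fun u => (φ (ε * u) - 1) * ĝ u :=
    hmajorant.mono' (((hφ.comp_mul_left' hε.ne').1.sub aestronglyMeasurable_const).mul
      (continuous_cosTransform integrable_gaussianDiff).aestronglyMeasurable)
      (ae_of_all _ hbound)
  calc ∫ x, cosTransform φ x * gaussianDiff (ε * x)
      = ∫ u, (φ (ε * u) - 1) * ĝ u + ĝ u := by
        rw [integral_cosTransform_mul_gaussianDiff_comp_mul_left hφ hε]
        congr with u
        ring
    _ = ∫ u, (φ (ε * u) - 1) * ĝ u := by
        rw [integral_add hdiff integrable_cosTransform_gaussianDiff,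
          integral_cosTransform_gaussianDiff, add_zero]
    _ ≤ ∫ u, ε ^ s * (|u| ^ s * |ĝ u|) :=
        integral_mono hdiff hmajorant fun u => (le_abs_self _).trans (hbound u)
    _ = ε ^ s * ∫ u, |u| ^ s * |ĝ u| := integral_const_mul _ _

theorem exists_mul_sq_le_integral_mul_gaussianDiff {F : ℝ → ℝ} (hF : Continuous F) {M : ℝ}
    (hM : ∀ x, |F x| ≤ M) (hnn : ∀ x, 0 ≤ F x) (hF0 : 0 < F 0) :
    ∃ c > 0, ∀ ε ∈ Ioc (0 : ℝ) 1, c * ε ^ 2 ≤ ∫ x, F x * gaussianDiff (ε * x) := by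
  obtain ⟨δ, hδ, hδ1, hFδ⟩ : ∃ δ > 0, δ ≤ 1 ∧ ∀ x ∈ Icc (-δ) δ, F 0 / 2 ≤ F x := by
    obtain ⟨r, hr, hFr⟩ := Metric.nhds_basis_closedBall.eventually_iff.mp
      ((hF.tendsto 0).eventually (eventually_ge_nhds (half_lt_self hF0)))
    refine ⟨min r 1, by positivity, min_le_right _ _, fun x hx => hFr ?_⟩
    rw [Metric.mem_closedBall, Real.dist_0_eq_abs, abs_le]
    exact ⟨le_trans (neg_le_neg (min_le_left _ _)) hx.1, hx.2.trans (min_le_left _ _)⟩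
  refine ⟨F 0 / 2 * exp (-2) * (2 * δ ^ 3 / 3), by positivity, fun ε hε => ?_⟩
  have hint : Integrable fun x => F x * gaussianDiff (ε * x) :=
    (integrable_gaussianDiff.comp_mul_left' hε.1.ne').bdd_mul hF.aestronglyMeasurable
      (ae_of_all _ hM)
  have hpointwise (x : ℝ) (hx : x ∈ Icc (-δ) δ) :
      F 0 / 2 * exp (-2) * ε ^ 2 * x ^ 2 ≤ F x * gaussianDiff (ε * x) := by
    have hεx : |ε * x| ≤ 1 := by
      rw [abs_mul, abs_of_pos hε.1]
      exact mul_le_one₀ hε.2 (abs_nonneg x) ((abs_le.mpr hx).trans hδ1)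
    calc F 0 / 2 * exp (-2) * ε ^ 2 * x ^ 2 = F 0 / 2 * (exp (-2) * (ε * x) ^ 2) := by ring
      _ ≤ F x * gaussianDiff (ε * x) :=
        mul_le_mul (hFδ x hx) (exp_neg_two_mul_sq_le_gaussianDiff hεx) (by positivity) (hnn x)
  calc F 0 / 2 * exp (-2) * (2 * δ ^ 3 / 3) * ε ^ 2
      = ∫ x in Icc (-δ) δ, F 0 / 2 * exp (-2) * ε ^ 2 * x ^ 2 := by
        rw [integral_Icc_eq_integral_Ioc, ← intervalIntegral.integral_of_le (by linarith),
          intervalIntegral.integral_const_mul, integral_pow]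
        ring
    _ ≤ ∫ x in Icc (-δ) δ, F x * gaussianDiff (ε * x) :=
        setIntegral_mono_on (Continuous.integrableOn_Icc (by fun_prop)) hint.integrableOn
          measurableSet_Icc hpointwise
    _ ≤ ∫ x, F x * gaussianDiff (ε * x) :=
        setIntegral_le_integral hint
          (ae_of_all _ fun x => mul_nonneg (hnn x) (gaussianDiff_nonneg _))

theorem not_forall_mul_sq_le_mul_rpow {c C s : ℝ} (hc : 0 < c) (hs : 2 < s) :
    ¬ ∀ ε ∈ Ioc (0 : ℝ) 1, c * ε ^ 2 ≤ ε ^ s * C := by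
  intro h
  have hlim : Tendsto (fun ε : ℝ => ε ^ (s - 2) * C) (𝓝[>] 0) (𝓝 0) := by
    have := (continuousAt_rpow_const 0 (s - 2) (Or.inr (by linarith))).tendsto
    rw [zero_rpow (by linarith)] at this
    simpa using (this.mono_left nhdsWithin_le_nhds).mul_const C
  have hev : ∀ᶠ ε in 𝓝[>] 0, c ≤ ε ^ (s - 2) * C := by
    filter_upwards [Ioo_mem_nhdsGT one_pos] with ε hε
    have hsplit : ε ^ s = ε ^ (s - 2) * ε ^ 2 := by
      rw [← rpow_natCast, ← rpow_add hε.1]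
      norm_num
    have := h ε ⟨hε.1, hε.2.le⟩
    rw [hsplit, mul_right_comm] at this
    exact le_of_mul_le_mul_right this (pow_pos hε.1 2)
  linarith [ge_of_tendsto hlim hev]

theorem stmt_9 (s : ℝ) (hs : 2 < s) :
    ∃ x : ℝ,
      (1 / (2 * Real.pi)) * (∫ ξ : ℝ, Real.exp (-(|ξ| ^ s)) * Real.cos (x * ξ)) < 0 := by
  set φ : ℝ → ℝ := fun ξ => exp (-|ξ| ^ s)
  have hφ : Integrable φ := integrable_exp_neg_abs_rpow (by linarith)
  by_contra! hK
  have hnn (x : ℝ) : 0 ≤ cosTransform φ x := nonneg_of_mul_nonneg_right (hK x) (by positivity)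
  have hF0 : 0 < cosTransform φ 0 := by simpa [cosTransform] using integral_exp_pos hφ
  obtain ⟨c, hc, hlow⟩ := exists_mul_sq_le_integral_mul_gaussianDiff
    (continuous_cosTransform hφ) (abs_cosTransform_le hφ) hnn hF0
  exact not_forall_mul_sq_le_mul_rpow hc hs fun ε hε => (hlow ε hε).trans <|
    integral_cosTransform_mul_gaussianDiff_le hφ (by linarith)
      (fun ξ => abs_exp_neg_sub_one_le (by positivity)) hε.1
end

section
/- Let d ≥ 1, let K : ℝ^d → [0, ∞) be integrable with ∫_{ℝ^d} K dx = 1, and let p ∈ (1, 2]. Then for every f ∈ L^p(ℝ^d) (complex-valued), ‖K * f‖_{L^p(ℝ^d)} ≤ ‖K * (|f|^{p/2})‖_{L²(ℝ^d)}^{2(p−1)/p} · ‖f‖_{L^p(ℝ^d)}^{2−p}, where * denotes convolution, (K*f)(x) = ∫_{ℝ^d} K(x−y) f(y) dy. -/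
/-!
With `A = ‖K‖ₑ` and `φ = ‖f‖ₑ` we have `‖K * f‖ₑ ≤ φ ⋆ A` pointwise. Hölder's inequality for the
weight `A (x - ·)` interpolates `φ ⋆ A ≤ (φ ^ (p/2) ⋆ A) ^ (2(p-1)/p) * (φ ^ p ⋆ A) ^ ((2-p)/p)`;
raising this to the power `p` and applying Hölder in `x` with exponents `p - 1` and `2 - p` leaves
`∫ φ ^ p ⋆ A = ‖f‖ₚ ^ p` by Tonelli. The `L²` factor is then identified with the Bochner
convolution `K * ‖f‖ ^ (p/2)`, which needs `φ ^ (p/2) ⋆ A < ∞` a.e.: this follows from Jensen,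
`(ψ ⋆ A) ^ 2 ≤ ψ ^ 2 ⋆ A`.
-/
open MeasureTheory
open scoped ENNReal

theorem ENNReal.lintegral_rpow_mul_rpow_mul_le {α : Type*} [MeasurableSpace α] {μ : Measure α}
    {u v w : α → ℝ≥0∞} (hu : AEMeasurable u μ) (hv : AEMeasurable v μ) (hw : AEMeasurable w μ)
    {a b : ℝ} (ha : 0 ≤ a) (hb : 0 ≤ b) (hab : a + b = 1) :
    ∫⁻ x, u x ^ a * v x ^ b * w x ∂μ ≤ (∫⁻ x, u x * w x ∂μ) ^ a * (∫⁻ x, v x * w x ∂μ) ^ b := by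
  calc ∫⁻ x, u x ^ a * v x ^ b * w x ∂μ = ∫⁻ x, (u x * w x) ^ a * (v x * w x) ^ b ∂μ := by
        refine lintegral_congr fun x => ?_
        rw [ENNReal.mul_rpow_of_nonneg _ _ ha, ENNReal.mul_rpow_of_nonneg _ _ hb,
          mul_mul_mul_comm, ← ENNReal.rpow_add_of_nonneg _ _ ha hb, hab, ENNReal.rpow_one]
    _ ≤ _ := ENNReal.lintegral_mul_norm_pow_le (hu.mul hw) (hv.mul hw) ha hb hab

section LConvolution

variable {G : Type*} [AddCommGroup G] [MeasurableSpace G] {μ : Measure G}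

theorem lconvolution_apply_sub (f g : G → ℝ≥0∞) (x : G) :
    (f ⋆ₗ[μ] g) x = ∫⁻ y, f y * g (x - y) ∂μ := by
  simp only [lconvolution_def, neg_add_eq_sub]

theorem lconvolution_enorm_smul_apply {E : Type*} [NormedAddCommGroup E] [NormedSpace ℝ E]
    (K : G → ℝ) (f : G → E) (x : G) :
    ((‖f ·‖ₑ) ⋆ₗ[μ] (‖K ·‖ₑ)) x = ∫⁻ y, ‖K (x - y) • f y‖ₑ ∂μ := by
  simp only [lconvolution_apply_sub, enorm_smul, mul_comm]

theorem enorm_integral_smul_le_lconvolution {E : Type*} [NormedAddCommGroup E] [NormedSpace ℝ E]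
    (K : G → ℝ) (f : G → E) (x : G) :
    ‖∫ y, K (x - y) • f y ∂μ‖ₑ ≤ ((‖f ·‖ₑ) ⋆ₗ[μ] (‖K ·‖ₑ)) x :=
  (enorm_integral_le_lintegral_enorm _).trans_eq (lconvolution_enorm_smul_apply K f x).symm

variable [MeasurableAdd₂ G] [MeasurableNeg G] [μ.IsAddLeftInvariant]

theorem lintegral_lconvolution [SFinite μ] {f g : G → ℝ≥0∞} (hf : AEMeasurable f μ)
    (hg : AEMeasurable g μ) :
    ∫⁻ x, (f ⋆ₗ[μ] g) x ∂μ = (∫⁻ x, f x ∂μ) * ∫⁻ x, g x ∂μ := by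
  simp only [lconvolution_def]
  rw [lintegral_lintegral_swap (by fun_prop)]
  have inner (y : G) : ∫⁻ x, f y * g (-y + x) ∂μ = f y * ∫⁻ x, g x ∂μ := by
    have hgy : AEMeasurable (fun x => g (-y + x)) μ :=
      hg.comp_quasiMeasurePreserving (measurePreserving_add_left μ (-y)).quasiMeasurePreserving
    rw [lintegral_const_mul'' _ hgy, lintegral_add_left_eq_self]
  simp only [inner]
  exact lintegral_mul_const'' _ hf

variable [μ.IsNegInvariant]

theorem AEMeasurable.comp_sub_left {g : G → ℝ≥0∞} (hg : AEMeasurable g μ) (x : G) :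
    AEMeasurable (fun y => g (x - y)) μ :=
  hg.comp_quasiMeasurePreserving (Measure.measurePreserving_sub_left μ x).quasiMeasurePreserving

theorem lconvolution_rpow_mul_rpow_le {u v g : G → ℝ≥0∞} (hu : AEMeasurable u μ)
    (hv : AEMeasurable v μ) (hg : AEMeasurable g μ) {a b : ℝ} (ha : 0 ≤ a) (hb : 0 ≤ b)
    (hab : a + b = 1) (x : G) :
    ((fun y => u y ^ a * v y ^ b) ⋆ₗ[μ] g) x ≤ (u ⋆ₗ[μ] g) x ^ a * (v ⋆ₗ[μ] g) x ^ b := by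
  simp only [lconvolution_apply_sub]
  exact ENNReal.lintegral_rpow_mul_rpow_mul_le hu hv (hg.comp_sub_left x) ha hb hab

theorem lconvolution_le_interpolation {φ A : G → ℝ≥0∞} (hφ : AEMeasurable φ μ)
    (hA : AEMeasurable A μ) {p : ℝ} (hp1 : 1 ≤ p) (hp2 : p ≤ 2) (x : G) :
    (φ ⋆ₗ[μ] A) x ≤
      ((φ · ^ (p / 2)) ⋆ₗ[μ] A) x ^ (2 * (p - 1) / p) * ((φ · ^ p) ⋆ₗ[μ] A) x ^ ((2 - p) / p) := by
  have hp0 : 0 < p := by linarith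
  have ha : 0 ≤ 2 * (p - 1) / p := by positivity
  have hb : 0 ≤ (2 - p) / p := div_nonneg (by linarith) hp0.le
  convert lconvolution_rpow_mul_rpow_le (hφ.pow_const (p / 2)) (hφ.pow_const p) hA ha hb
    (by field_simp; ring) x using 3 with y
  rw [← ENNReal.rpow_mul, ← ENNReal.rpow_mul,
    ← ENNReal.rpow_add_of_nonneg _ _ (by positivity) (by positivity)]
  convert (ENNReal.rpow_one (φ y)).symm using 2
  field_simp
  ring

theorem lintegral_lconvolution_rpow_le [SFinite μ] {φ A : G → ℝ≥0∞} (hφ : AEMeasurable φ μ)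
    (hA : AEMeasurable A μ) (hA1 : ∫⁻ z, A z ∂μ ≤ 1) {p : ℝ} (hp1 : 1 ≤ p) (hp2 : p ≤ 2) :
    ∫⁻ x, (φ ⋆ₗ[μ] A) x ^ p ∂μ ≤
      (∫⁻ x, ((φ · ^ (p / 2)) ⋆ₗ[μ] A) x ^ (2 : ℝ) ∂μ) ^ (p - 1) *
        (∫⁻ y, φ y ^ p ∂μ) ^ (2 - p) := by
  have hp0 : 0 < p := by linarith
  calc ∫⁻ x, (φ ⋆ₗ[μ] A) x ^ p ∂μ
      ≤ ∫⁻ x, (((φ · ^ (p / 2)) ⋆ₗ[μ] A) x ^ (2 : ℝ)) ^ (p - 1) *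
          ((φ · ^ p) ⋆ₗ[μ] A) x ^ (2 - p) ∂μ := by
        refine lintegral_mono fun x => ?_
        calc (φ ⋆ₗ[μ] A) x ^ p
            ≤ (((φ · ^ (p / 2)) ⋆ₗ[μ] A) x ^ (2 * (p - 1) / p) *
                ((φ · ^ p) ⋆ₗ[μ] A) x ^ ((2 - p) / p)) ^ p := by
              gcongr
              exact lconvolution_le_interpolation hφ hA hp1 hp2 x
          _ = _ := by
              rw [ENNReal.mul_rpow_of_nonneg _ _ hp0.le, ← ENNReal.rpow_mul, ← ENNReal.rpow_mul,
                ← ENNReal.rpow_mul]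
              congr 2 <;> field_simp
    _ ≤ (∫⁻ x, ((φ · ^ (p / 2)) ⋆ₗ[μ] A) x ^ (2 : ℝ) ∂μ) ^ (p - 1) *
          (∫⁻ x, ((φ · ^ p) ⋆ₗ[μ] A) x ∂μ) ^ (2 - p) :=
        ENNReal.lintegral_mul_norm_pow_le
          ((aemeasurable_lconvolution (hφ.pow_const _) hA).pow_const _)
          (aemeasurable_lconvolution (hφ.pow_const _) hA) (by linarith) (by linarith) (by ring)
    _ ≤ _ := by
        rw [lintegral_lconvolution (hφ.pow_const _) hA]
        gcongr
        exact mul_le_of_le_one_right' hA1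

theorem eLpNorm_lconvolution_le [SFinite μ] {φ A : G → ℝ≥0∞} (hφ : AEMeasurable φ μ)
    (hA : AEMeasurable A μ) (hA1 : ∫⁻ z, A z ∂μ ≤ 1) {p : ℝ} (hp1 : 1 ≤ p) (hp2 : p ≤ 2) :
    eLpNorm (φ ⋆ₗ[μ] A) (.ofReal p) μ ≤
      eLpNorm ((φ · ^ (p / 2)) ⋆ₗ[μ] A) 2 μ ^ (2 * (p - 1) / p) *
        eLpNorm φ (.ofReal p) μ ^ (2 - p) := by
  have hp0 : 0 < p := by linarith
  have hp_ne : ENNReal.ofReal p ≠ 0 := ENNReal.ofReal_ne_zero_iff.mpr hp0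
  simp only [eLpNorm_eq_lintegral_rpow_enorm_toReal hp_ne ENNReal.ofReal_ne_top,
    eLpNorm_eq_lintegral_rpow_enorm_toReal two_ne_zero ENNReal.ofNat_ne_top,
    ENNReal.toReal_ofReal hp0.le, ENNReal.toReal_ofNat, enorm_eq_self]
  calc (∫⁻ x, (φ ⋆ₗ[μ] A) x ^ p ∂μ) ^ (1 / p)
      ≤ ((∫⁻ x, ((φ · ^ (p / 2)) ⋆ₗ[μ] A) x ^ (2 : ℝ) ∂μ) ^ (p - 1) *
          (∫⁻ y, φ y ^ p ∂μ) ^ (2 - p)) ^ (1 / p) := by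
        gcongr
        exact lintegral_lconvolution_rpow_le hφ hA hA1 hp1 hp2
    _ = _ := by
        rw [ENNReal.mul_rpow_of_nonneg _ _ (by positivity), ← ENNReal.rpow_mul,
          ← ENNReal.rpow_mul, ← ENNReal.rpow_mul, ← ENNReal.rpow_mul]
        congr 2 <;> ring

theorem lconvolution_sq_le {ψ A : G → ℝ≥0∞} (hψ : AEMeasurable ψ μ) (hA : AEMeasurable A μ)
    (hA1 : ∫⁻ z, A z ∂μ ≤ 1) (x : G) :
    (ψ ⋆ₗ[μ] A) x ^ (2 : ℝ) ≤ ((ψ · ^ (2 : ℝ)) ⋆ₗ[μ] A) x := by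
  have hA1x : (1 ⋆ₗ[μ] A) x ≤ 1 := by
    simpa [lconvolution_apply_sub, lintegral_sub_left_eq_self] using hA1
  have key : (ψ ⋆ₗ[μ] A) x
      ≤ (1 ⋆ₗ[μ] A) x ^ (2⁻¹ : ℝ) * ((ψ · ^ (2 : ℝ)) ⋆ₗ[μ] A) x ^ (2⁻¹ : ℝ) := by
    convert lconvolution_rpow_mul_rpow_le (u := 1) (a := 2⁻¹) (b := 2⁻¹) aemeasurable_const
      (hψ.pow_const (2 : ℝ)) hA (by norm_num) (by norm_num) (by norm_num) x using 3 with y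
    rw [Pi.one_apply, ENNReal.one_rpow, one_mul, ← ENNReal.rpow_mul]
    norm_num
  calc (ψ ⋆ₗ[μ] A) x ^ (2 : ℝ)
      ≤ ((1 ⋆ₗ[μ] A) x ^ (2⁻¹ : ℝ) * ((ψ · ^ (2 : ℝ)) ⋆ₗ[μ] A) x ^ (2⁻¹ : ℝ)) ^ (2 : ℝ) := by
        gcongr
    _ ≤ (1 * ((ψ · ^ (2 : ℝ)) ⋆ₗ[μ] A) x ^ (2⁻¹ : ℝ)) ^ (2 : ℝ) := by
        gcongr
        exact ENNReal.rpow_le_one hA1x (by norm_num)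
    _ = ((ψ · ^ (2 : ℝ)) ⋆ₗ[μ] A) x := by
        rw [one_mul, ← ENNReal.rpow_mul]
        norm_num

theorem lintegral_lconvolution_sq_le [SFinite μ] {ψ A : G → ℝ≥0∞} (hψ : AEMeasurable ψ μ)
    (hA : AEMeasurable A μ) (hA1 : ∫⁻ z, A z ∂μ ≤ 1) :
    ∫⁻ x, (ψ ⋆ₗ[μ] A) x ^ (2 : ℝ) ∂μ ≤ ∫⁻ x, ψ x ^ (2 : ℝ) ∂μ :=
  calc ∫⁻ x, (ψ ⋆ₗ[μ] A) x ^ (2 : ℝ) ∂μ ≤ ∫⁻ x, ((ψ · ^ (2 : ℝ)) ⋆ₗ[μ] A) x ∂μ :=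
        lintegral_mono (lconvolution_sq_le hψ hA hA1)
    _ ≤ _ := by
        rw [lintegral_lconvolution (hψ.pow_const _) hA]
        exact mul_le_of_le_one_right' hA1

theorem ae_lconvolution_lt_top [SFinite μ] {ψ A : G → ℝ≥0∞} (hψ : AEMeasurable ψ μ)
    (hA : AEMeasurable A μ) (hA1 : ∫⁻ z, A z ∂μ ≤ 1) (hψ2 : ∫⁻ x, ψ x ^ (2 : ℝ) ∂μ ≠ ∞) :
    ∀ᵐ x ∂μ, (ψ ⋆ₗ[μ] A) x < ∞ := by
  filter_upwards [ae_lt_top' ((aemeasurable_lconvolution hψ hA).pow_const _)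
    (ne_top_of_le_ne_top hψ2 (lintegral_lconvolution_sq_le hψ hA hA1))] with x hx
  exact (ENNReal.rpow_lt_top_iff_of_pos two_pos).mp hx

theorem enorm_integral_mul_eq_lconvolution {K g : G → ℝ} (hK : AEStronglyMeasurable K μ)
    (hg : AEStronglyMeasurable g μ) (hK0 : 0 ≤ K) (hg0 : 0 ≤ g) {x : G}
    (hx : ((‖g ·‖ₑ) ⋆ₗ[μ] (‖K ·‖ₑ)) x ≠ ∞) :
    ‖∫ y, K (x - y) * g y ∂μ‖ₑ = ((‖g ·‖ₑ) ⋆ₗ[μ] (‖K ·‖ₑ)) x := by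
  have hconv := lconvolution_enorm_smul_apply (μ := μ) K g x
  simp only [smul_eq_mul] at hconv
  have hint : Integrable (fun y => K (x - y) * g y) μ :=
    ⟨(hK.comp_measurePreserving (Measure.measurePreserving_sub_left μ x)).mul hg,
      by rw [HasFiniteIntegral, ← hconv]; exact hx.lt_top⟩
  have hnn : 0 ≤ fun y => K (x - y) * g y := fun y => mul_nonneg (hK0 _) (hg0 y)
  rw [hconv, Real.enorm_eq_ofReal (integral_nonneg hnn),
    ofReal_integral_eq_lintegral_ofReal hint (.of_forall hnn), lintegral_enorm_of_nonneg hnn]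

end LConvolution

theorem stmt_16_general (d : ℕ) (K : (Fin d → ℝ) → ℝ)
    (hK0 : ∀ x, 0 ≤ K x) (hKi : Integrable K) (hK1 : (∫ x, K x) = 1)
    (p : ℝ) (hp1 : 1 < p) (hp2 : p ≤ 2)
    (f : (Fin d → ℝ) → ℂ) (hf : MemLp f (ENNReal.ofReal p)) :
    eLpNorm (fun x => ∫ y, (K (x - y) : ℂ) * f y) (ENNReal.ofReal p) volume ≤
      (eLpNorm (fun x => ∫ y, K (x - y) * ‖f y‖ ^ (p / 2)) 2 volume) ^ (2 * (p - 1) / p) *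
        (eLpNorm f (ENNReal.ofReal p) volume) ^ (2 - p) := by
  have hp0 : 0 < p := by linarith
  have hA : AEMeasurable (‖K ·‖ₑ) := hKi.1.enorm
  have hφ : AEMeasurable (‖f ·‖ₑ) := hf.1.enorm
  have hA1 : ∫⁻ z, ‖K z‖ₑ = 1 := by
    rw [lintegral_enorm_of_nonneg hK0, ← ofReal_integral_eq_lintegral_ofReal hKi (.of_forall hK0),
      hK1, ENNReal.ofReal_one]
  have hφp : ∫⁻ y, (‖f y‖ₑ ^ (p / 2)) ^ (2 : ℝ) ≠ ∞ := by
    simp_rw [← ENNReal.rpow_mul, div_mul_cancel₀ p two_ne_zero]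
    simpa [ENNReal.toReal_ofReal hp0.le] using (lintegral_rpow_enorm_lt_top_of_eLpNorm_lt_top
      (ENNReal.ofReal_ne_zero_iff.mpr hp0) ENNReal.ofReal_ne_top hf.2).ne
  have hpow : (fun y => ‖‖f y‖ ^ (p / 2)‖ₑ) = (‖f ·‖ₑ ^ (p / 2)) :=
    funext fun y => by rw [Real.enorm_rpow_of_nonneg (norm_nonneg _) (by linarith), enorm_norm]
  have hreal : eLpNorm (fun x => ∫ y, K (x - y) * ‖f y‖ ^ (p / 2)) 2 volume =
      eLpNorm ((‖f ·‖ₑ ^ (p / 2)) ⋆ₗ (‖K ·‖ₑ)) 2 volume := by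
    refine eLpNorm_congr_enorm_ae ?_
    filter_upwards [ae_lconvolution_lt_top (hφ.pow_const _) hA hA1.le hφp] with x hx
    have hg : AEStronglyMeasurable (‖f ·‖ ^ (p / 2)) :=
      (hf.1.norm.aemeasurable.pow_const _).aestronglyMeasurable
    rw [enorm_integral_mul_eq_lconvolution hKi.1 hg hK0
      (fun y => Real.rpow_nonneg (norm_nonneg _) _) (by rw [hpow]; exact hx.ne), hpow,
      enorm_eq_self]
  calc eLpNorm (fun x => ∫ y, (K (x - y) : ℂ) * f y) (ENNReal.ofReal p) volume
      ≤ eLpNorm ((‖f ·‖ₑ) ⋆ₗ (‖K ·‖ₑ)) (ENNReal.ofReal p) volume :=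
        eLpNorm_mono_enorm fun x => by
          simpa [← Complex.real_smul] using enorm_integral_smul_le_lconvolution K f x
    _ ≤ _ := eLpNorm_lconvolution_le hφ hA hA1.le hp1.le hp2
    _ = _ := by rw [hreal, eLpNorm_enorm]

theorem stmt_16 (d : ℕ) (hd : 1 ≤ d) (K : (Fin d → ℝ) → ℝ)
    (hK0 : ∀ x, 0 ≤ K x) (hKi : Integrable K) (hK1 : (∫ x, K x) = 1)
    (p : ℝ) (hp1 : 1 < p) (hp2 : p ≤ 2)
    (f : (Fin d → ℝ) → ℂ) (hf : MemLp f (ENNReal.ofReal p)) :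
    eLpNorm (fun x => ∫ y, (K (x - y) : ℂ) * f y) (ENNReal.ofReal p) volume ≤
      (eLpNorm (fun x => ∫ y, K (x - y) * ‖f y‖ ^ (p / 2)) 2 volume) ^ (2 * (p - 1) / p) *
        (eLpNorm f (ENNReal.ofReal p) volume) ^ (2 - p) :=
  stmt_16_general d K hK0 hKi hK1 p hp1 hp2 f hf
end
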